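/- arXiv:2108.11087 — 4 statements merged into one kernel-verified Lean document; each statement's English description precedes it below -/
import Mathlib

section
/- Let (S, 𝔫) be a commutative Noetherian local ring and I an 𝔫-primary ideal; write R = S/I with maximal ideal 𝔪 = 𝔫/I and v = v_S(I) = max{n | I ⊆ 𝔫^n}. Then the top socle degree of R satisfies s(R) ≤ ℓ_S(R) − Σ_{i=0}^{v−1} h_S(i) + v − 1. -/
/-!
Filter `R = S ⧸ I` by the images `𝔪^i` of the powers of `𝔫`. For `i < v` we have
`I ⊆ 𝔫^(i+1)`, so `𝔪^i / 𝔪^(i+1) ≅ 𝔫^i / 𝔫^(i+1)` and this step of the filtration has length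
`h_S(i)`. For `v ≤ i ≤ s` the inclusion `𝔪^(i+1) ⊂ 𝔪^i` is strict, since otherwise the powers of
`𝔪` would stabilise at `𝔪^i`, forcing `𝔪^s = 𝔪^(s+1) = 0`; each such step has length at least
one. Adding up, `ℓ_S(R) ≥ Σ_{i<v} h_S(i) + (s + 1 - v)`.
-/

open IsLocalRing

/-- The length of a module: the Krull dimension of its lattice of submodules. -/
noncomputable def moduleLength (R M : Type*) [Ring R] [AddCommGroup M] [Module R M] :
    WithBot ℕ∞ :=
  Order.krullDim (Submodule R M)

open Order

lemma moduleLength_eq_length (R M : Type*) [Ring R] [AddCommGroup M] [Module R M] :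
    moduleLength R M = Module.length R M :=
  (Module.coe_length R M).symm

namespace Order

variable {α β : Type*} [Preorder α] [PartialOrder β]

lemma height_head_add_length_le_height_last (p : LTSeries α) :
    height p.head + p.length ≤ height p.last := by
  cases h : height p.head with
  | top => simpa [h] using height_mono (α := α) p.head_le_last
  | coe n =>
    obtain ⟨q, hq_last, hq_len⟩ := exists_series_of_height_eq_coe p.head h
    simpa [hq_len] using length_le_height_last (p := q.smash p hq_last)

lemma height_bot_add_height_le_of_strictMono [OrderBot β] {f : β → α} (hf : StrictMono f)
    (x : β) : height (f ⊥) + height x ≤ height (f x) := by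
  cases h : height x with
  | top => simpa [h] using height_le_height_apply_of_strictMono f hf x
  | coe n =>
    obtain ⟨p, hp_last, hp_len⟩ := exists_series_of_height_eq_coe x h
    calc height (f ⊥) + n ≤ height (p.map f hf).head + (p.map f hf).length := by
          gcongr
          · exact hf.monotone bot_le
          · simp [hp_len]
      _ ≤ height (p.map f hf).last := height_head_add_length_le_height_last _
      _ = height (f x) := by simp [hp_last]

end Order

lemma add_sum_range_le_of_succ_add_le {M : Type*} [AddCommMonoid M] [PartialOrder M]
    [IsOrderedAddMonoid M] {f d : ℕ → M} {n : ℕ} (h : ∀ i < n, f (i + 1) + d i ≤ f i) :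
    f n + ∑ i ∈ Finset.range n, d i ≤ f 0 := by
  induction n with
  | zero => simp
  | succ n ih =>
    calc f (n + 1) + ∑ i ∈ Finset.range (n + 1), d i
        = f (n + 1) + d n + ∑ i ∈ Finset.range n, d i := by
          rw [Finset.sum_range_succ, add_comm _ (d n), add_assoc]
      _ ≤ f n + ∑ i ∈ Finset.range n, d i := by gcongr; exact h n n.lt_succ_self
      _ ≤ f 0 := ih fun i hi => h i (hi.trans n.lt_succ_self)

namespace Submodule

variable {R M P : Type*} [Ring R] [AddCommGroup M] [Module R M] [AddCommGroup P] [Module R P]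

lemma height_map_add_length_subquotient_le (f : M →ₗ[R] P) {A B : Submodule R M}
    (hBA : B ≤ A) (hker : LinearMap.ker f ≤ B) :
    height (B.map f) + Module.length R (A ⧸ B.comap A.subtype) ≤ height (A.map f) := by
  set K := B.comap A.subtype
  set g := f ∘ₗ A.subtype
  have hkerg : LinearMap.ker g ≤ K := fun x hx => hker hx
  have hK : ∀ W : Submodule R (A ⧸ K), LinearMap.ker g ≤ W.comap K.mkQ := fun W =>
    hkerg.trans ((ker_mkQ K).symm.le.trans (LinearMap.ker_le_comap _))
  -- `W ↦ g(π⁻¹ W)` embeds the submodules of `A ⧸ K` into the interval `[f B, f A]`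
  have hφ : StrictMono fun W : Submodule R (A ⧸ K) => (W.comap K.mkQ).map g := by
    intro W W' hW
    have hlt := comap_strictMono_of_surjective K.mkQ_surjective hW
    refine (map_mono hlt.le).lt_of_ne fun heq => hlt.ne ?_
    have := congrArg (comap g) heq
    rwa [comap_map_eq_self (hK W), comap_map_eq_self (hK W')] at this
  have key := height_bot_add_height_le_of_strictMono hφ ⊤
  rw [← Module.length_eq_height] at key
  convert key using 3
  · rw [comap_bot, ker_mkQ, map_comp, map_comap_subtype, inf_eq_right.mpr hBA]
  · rw [comap_top, map_comp, map_top, range_subtype]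

end Submodule

lemma Ideal.pow_succ_lt_pow_of_le {R : Type*} [CommSemiring R] {J : Ideal R} {i s : ℕ}
    (his : i ≤ s) (hs : J ^ s ≠ ⊥) (hs1 : J ^ (s + 1) = ⊥) : J ^ (i + 1) < J ^ i := by
  refine (Ideal.pow_le_pow_right i.le_succ).lt_of_ne fun heq => hs ?_
  have hstable : ∀ k, J ^ (i + k) = J ^ i := by
    intro k
    induction k with
    | zero => rfl
    | succ k ih => rw [← add_assoc, pow_succ, ih, ← pow_succ, heq]
  obtain ⟨k, hk⟩ := Nat.exists_eq_add_of_le (his.trans (Nat.le_add_right s 1))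
  rw [← le_bot_iff, ← hs1, hk, hstable]
  exact Ideal.pow_le_pow_right his

lemma Ideal.restrictScalars_map_quotientMk {S : Type*} [CommRing S] (I J : Ideal S) :
    (J.map (Ideal.Quotient.mk I)).restrictScalars S = Submodule.map I.mkQ J := by
  ext x
  rw [Submodule.restrictScalars_mem,
    Ideal.mem_map_iff_of_surjective _ Ideal.Quotient.mk_surjective]
  rfl

theorem top_socle_degree_le_general
    (S : Type*) [CommRing S] [IsLocalRing S]
    (I : Ideal S)
    (ℓ : ℕ) (hℓ : moduleLength S (S ⧸ I) = (ℓ : ℕ∞))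
    (hS : ℕ → ℕ)
    (hhS : ∀ i : ℕ, moduleLength S
        (↥(maximalIdeal S ^ i) ⧸
          Submodule.comap (maximalIdeal S ^ i).subtype (maximalIdeal S ^ (i + 1))) =
        ((hS i : ℕ∞) : WithBot ℕ∞))
    (v : ℕ) (hv : IsGreatest {n : ℕ | I ≤ maximalIdeal S ^ n} v)
    (s : ℕ)
    (hs : IsGreatest {n : ℕ |
        ((maximalIdeal S).map (Ideal.Quotient.mk I)) ^ n ≠ ⊥} s) :
    (s : ℤ) ≤ (ℓ : ℤ) - (∑ i ∈ Finset.range v, (hS i : ℤ)) + v - 1 := by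
  -- `F i = ℓ_S(𝔪^i)`, the height of a submodule being its length
  set F : ℕ → ℕ∞ := fun i =>
    height ((((maximalIdeal S).map (Ideal.Quotient.mk I)) ^ i).restrictScalars S)
  have hF0 : F 0 ≤ ℓ := by
    rw [moduleLength_eq_length, Module.length_eq_height] at hℓ
    exact (height_mono le_top).trans (WithBot.coe_le_coe.mp hℓ.le)
  have hHilbert : ∀ i < v, F (i + 1) + hS i ≤ F i := by
    intro i hi
    have hlen := hhS i
    rw [moduleLength_eq_length, WithBot.coe_inj] at hlen
    simp only [F, ← Ideal.map_pow, Ideal.restrictScalars_map_quotientMk, ← hlen]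
    refine Submodule.height_map_add_length_subquotient_le _ (Ideal.pow_le_pow_right i.le_succ) ?_
    rw [Submodule.ker_mkQ]
    exact hv.1.trans (Ideal.pow_le_pow_right hi)
  have hvanish : (maximalIdeal S).map (Ideal.Quotient.mk I) ^ (s + 1) = ⊥ :=
    not_not.mp fun h => (hs.2 h).not_gt s.lt_succ_self
  have hSocle : ∀ j < s + 1 - v, F (v + j + 1) + 1 ≤ F (v + j) := fun j hj =>
    height_add_one_le <| (Submodule.restrictScalarsEmbedding S _ _).strictMono <|
      Ideal.pow_succ_lt_pow_of_le (by omega) hs.1 hvanish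
  have hsum := add_sum_range_le_of_succ_add_le hHilbert
  have hchain :=
    add_sum_range_le_of_succ_add_le (f := fun j => F (v + j)) (d := fun _ => 1) hSocle
  have hbound : ((s + 1 - v + ∑ i ∈ Finset.range v, hS i : ℕ) : ℕ∞) ≤ ℓ := by
    simp only [Finset.sum_const, Finset.card_range, nsmul_one, add_zero] at hchain
    push_cast
    calc ((s + 1 - v : ℕ) : ℕ∞) + ∑ i ∈ Finset.range v, (hS i : ℕ∞)
        ≤ F v + ∑ i ∈ Finset.range v, (hS i : ℕ∞) := by gcongr; exact le_add_self.trans hchain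
      _ ≤ ℓ := hsum.trans hF0
  have := Nat.cast_le.mp hbound
  rw [← Nat.cast_sum]
  omega

/-- Let `(S, 𝔫)` be a Noetherian local ring, `I` an `𝔫`-primary ideal,
`R = S ⧸ I`, `v = v_S(I) = max{n ∣ I ⊆ 𝔫^n}`, `ℓ = ℓ_S(R)`, and `hS` the Hilbert function
of `S` (`hS i = ℓ_S(𝔫^i/𝔫^(i+1))`).  If `s` is the top socle degree of `R` then
`s ≤ ℓ − Σ_{i=0}^{v−1} hS i + v − 1`. -/
theorem top_socle_degree_le
    (S : Type*) [CommRing S] [IsNoetherianRing S] [IsLocalRing S]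
    (I : Ideal S) (hprim : I.radical = maximalIdeal S)
    (ℓ : ℕ) (hℓ : moduleLength S (S ⧸ I) = (ℓ : ℕ∞))
    (hS : ℕ → ℕ)
    (hhS : ∀ i : ℕ, moduleLength S
        (↥(maximalIdeal S ^ i) ⧸
          Submodule.comap (maximalIdeal S ^ i).subtype (maximalIdeal S ^ (i + 1))) =
        ((hS i : ℕ∞) : WithBot ℕ∞))
    (v : ℕ) (hv : IsGreatest {n : ℕ | I ≤ maximalIdeal S ^ n} v)
    (s : ℕ)
    (hs : IsGreatest {n : ℕ |
        ((maximalIdeal S).map (Ideal.Quotient.mk I)) ^ n ≠ ⊥} s) :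
    (s : ℤ) ≤ (ℓ : ℤ) - (∑ i ∈ Finset.range v, (hS i : ℤ)) + v - 1 :=
  top_socle_degree_le_general S I ℓ hℓ hS hhS v hv s hs
end

section
/- Let (S, 𝔫) be a one-dimensional Noetherian local domain, not regular, with infinite residue field and quotient field K, whose integral closure S̄ in K is a discrete valuation ring and a finitely generated S-module, and such that S ⊆ S̄ induces an isomorphism of residue fields. Let Val be the valuation of S̄ on K and set e := min{Val(a) | a ∈ 𝔫, a ≠ 0} (the multiplicity of S). Then for every 𝔫-primary ideal I of S: s(S/I) ≤ s(S/I)·e ≤ g(I), where s(S/I) is the top socle degree of S/I and g(I) is the Frobenius number of I. -/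
open IsLocalRing

/-!
A nonzero `a ∈ 𝔫` is a nonunit of `S`, hence of the integral extension `S̄`, so `Val a ≥ 1`;
thus `e ≥ 1`. Moreover `𝔫 S̄ ⊆ t^e S̄`, hence `𝔫^s S̄ ⊆ t^(s e) S̄`. Since `(𝔫 (S/I))^s ≠ 0` there
is `b ∈ 𝔫^s` with `b ∉ I`; then `s e ≤ Val b`, and `Val b ≤ g(I)` because `b ∉ I`.
-/

section Valuation

variable {R K : Type*} [CommRing R] [Field K] [Algebra R K] {A : Subalgebra R K} {t : A}

def IsValuationWithUniformizer (t : A) (v : K → ℤ) : Prop :=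
  ∀ a : K, a ≠ 0 → ∃ u : Aˣ, a = ((u : A) : K) * (t : K) ^ v a

theorem eq_of_unit_mul_zpow_eq (ht : Irreducible t) {u w : Aˣ} {m n : ℤ}
    (h : ((u : A) : K) * (t : K) ^ m = ((w : A) : K) * (t : K) ^ n) : m = n := by
  wlog hmn : m ≤ n generalizing u w m n
  · exact (this h.symm (le_of_not_ge hmn)).symm
  obtain ⟨k, rfl⟩ := Int.exists_add_of_le hmn
  have htK : (t : K) ≠ 0 := by exact_mod_cast ht.ne_zero
  have hu : ((u : A) : K) = (w : A) * (t : K) ^ k :=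
    mul_right_cancel₀ (zpow_ne_zero m htK) (by rw [h, zpow_add₀ htK, zpow_natCast]; ring)
  have hw : ((w : A) : K) * (((w⁻¹ : Aˣ) : A) : K) = 1 := by
    rw [← Subalgebra.coe_mul, Units.mul_inv, Subalgebra.coe_one]
  have htk : t ^ k = ((u * w⁻¹ : Aˣ) : A) := Subtype.coe_injective <| by
    push_cast
    linear_combination (-(((w⁻¹ : Aˣ) : A) : K)) * hu - (t : K) ^ k * hw
  obtain rfl : k = 0 := by
    by_contra hk
    exact ht.not_isUnit ((isUnit_pow_iff hk).mp (htk ▸ Units.isUnit _))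
  simp

namespace IsValuationWithUniformizer

variable {v : K → ℤ}

theorem apply_unit_mul_zpow (hv : IsValuationWithUniformizer t v) (ht : Irreducible t)
    (u : Aˣ) (n : ℤ) : v (((u : A) : K) * (t : K) ^ n) = n := by
  have htK : (t : K) ≠ 0 := by exact_mod_cast ht.ne_zero
  have huK : ((u : A) : K) ≠ 0 := by exact_mod_cast u.ne_zero
  obtain ⟨w, hw⟩ := hv _ (mul_ne_zero huK (zpow_ne_zero n htK))
  exact (eq_of_unit_mul_zpow_eq ht hw).symm

theorem apply_zpow (hv : IsValuationWithUniformizer t v) (ht : Irreducible t) (n : ℤ) :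
    v ((t : K) ^ n) = n := by
  simpa using hv.apply_unit_mul_zpow ht 1 n

theorem map_mul (hv : IsValuationWithUniformizer t v) (ht : Irreducible t) {a b : K}
    (ha : a ≠ 0) (hb : b ≠ 0) : v (a * b) = v a + v b := by
  have htK : (t : K) ≠ 0 := by exact_mod_cast ht.ne_zero
  obtain ⟨u, hu⟩ := hv a ha
  obtain ⟨w, hw⟩ := hv b hb
  have hab : a * b = (((u * w : Aˣ) : A) : K) * (t : K) ^ (v a + v b) := by
    push_cast
    rw [zpow_add₀ htK]
    linear_combination b * hu + ((u : A) : K) * (t : K) ^ v a * hw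
  rw [hab, hv.apply_unit_mul_zpow ht]

theorem nonneg (hv : IsValuationWithUniformizer t v) (ht : Irreducible t) {x : A}
    (hx : (x : K) ≠ 0) : 0 ≤ v x := by
  have htK : (t : K) ≠ 0 := by exact_mod_cast ht.ne_zero
  obtain ⟨u, hu⟩ := hv x hx
  by_contra! hneg
  obtain ⟨k, hk⟩ := Int.eq_negSucc_of_lt_zero hneg
  have hxt : x * t ^ (k + 1) = u := Subtype.coe_injective <| by
    push_cast
    rw [hu, hk, zpow_negSucc, mul_assoc, inv_mul_cancel₀ (pow_ne_zero _ htK), mul_one]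
  exact ht.not_isUnit <| (isUnit_pow_iff k.succ_ne_zero).mp <|
    isUnit_of_mul_isUnit_right (hxt ▸ u.isUnit)

theorem mem_span_pow_iff (hv : IsValuationWithUniformizer t v) (ht : Irreducible t) {x : A}
    (hx : (x : K) ≠ 0) (n : ℕ) : x ∈ Ideal.span {t ^ n} ↔ (n : ℤ) ≤ v x := by
  have htK : (t : K) ≠ 0 := by exact_mod_cast ht.ne_zero
  constructor
  · intro h
    obtain ⟨c, rfl⟩ := Ideal.mem_span_singleton'.mp h
    have hc : (c : K) ≠ 0 := fun hc => hx (by simp [hc])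
    have hval : v ((c * t ^ n : A) : K) = v c + n := by
      rw [Subalgebra.coe_mul, Subalgebra.coe_pow, hv.map_mul ht hc (pow_ne_zero n htK),
        ← zpow_natCast, hv.apply_zpow ht]
    linarith [hv.nonneg ht hc]
  · intro h
    obtain ⟨u, hu⟩ := hv x hx
    obtain ⟨k, hk⟩ := Int.exists_add_of_le h
    refine Ideal.mem_span_singleton'.mpr ⟨u * t ^ k, Subtype.coe_injective ?_⟩
    push_cast
    rw [hu, hk, zpow_add₀ htK, zpow_natCast, zpow_natCast]
    ring

theorem one_le_of_mem_maximalIdeal [IsLocalRing R] [Algebra.IsIntegral R A]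
    (hv : IsValuationWithUniformizer t v) (ht : Irreducible t)
    (hinj : Function.Injective (algebraMap R K)) {a : R} (ha : a ∈ maximalIdeal R)
    (ha0 : a ≠ 0) :
    1 ≤ v (algebraMap R K a) := by
  have hx : algebraMap R K a ≠ 0 := (map_ne_zero_iff _ hinj).mpr ha0
  have hnonneg : 0 ≤ v (algebraMap R K a) := hv.nonneg ht (x := algebraMap R A a) hx
  by_contra! hle
  obtain ⟨u, hu⟩ := hv _ hx
  have hau : algebraMap R A a = u := Subtype.coe_injective <| by
    simpa [show v (algebraMap R K a) = 0 by omega] using hu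
  have : IsLocalHom (algebraMap R A) := (algebraMap_isIntegral_iff.mpr inferInstance).isLocalHom
    fun a b h => hinj (congrArg Subtype.val h)
  exact (mem_maximalIdeal _).mp ha (isUnit_of_map_unit (algebraMap R A) a (hau ▸ u.isUnit))

theorem le_of_mem_pow (hv : IsValuationWithUniformizer t v) (ht : Irreducible t)
    {J : Ideal R} {m : ℕ}
    (hJ : ∀ a ∈ J, algebraMap R K a ≠ 0 → (m : ℤ) ≤ v (algebraMap R K a))
    {s : ℕ} {b : R} (hb : b ∈ J ^ s) (hb0 : algebraMap R K b ≠ 0) :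
    ((m * s : ℕ) : ℤ) ≤ v (algebraMap R K b) := by
  have hJmap : J.map (algebraMap R A) ≤ Ideal.span {t ^ m} := by
    refine Ideal.map_le_iff_le_comap.mpr fun a ha => ?_
    by_cases ha0 : algebraMap R K a = 0
    · have : algebraMap R A a = 0 := Subtype.coe_injective ha0
      simp [this]
    · exact (hv.mem_span_pow_iff ht ha0 m).mpr (hJ a ha ha0)
  have hbt : algebraMap R A b ∈ Ideal.span {t ^ (m * s)} := by
    rw [pow_mul, ← Ideal.span_singleton_pow]
    exact Ideal.pow_right_mono hJmap s
      (Ideal.map_pow (algebraMap R A) J s ▸ Ideal.mem_map_of_mem _ hb)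
  exact (hv.mem_span_pow_iff ht hb0 _).mp hbt

end IsValuationWithUniformizer

end Valuation

theorem socle_degree_mul_multiplicity_le_frobenius_general
    (S : Type*) [CommRing S] [IsLocalRing S]
    (K : Type*) [Field K] [Algebra S K] [IsFractionRing S K]
    (t : ↥(integralClosure S K)) (ht : Irreducible t)
    (Val : K → ℤ)
    (hVal : ∀ a : K, a ≠ 0 → ∃ u : (↥(integralClosure S K))ˣ,
      a = ((u : ↥(integralClosure S K)) : K) * (t : K) ^ (Val a))
    (e : ℤ)
    (he : IsLeast {n : ℤ | ∃ a : S, a ∈ maximalIdeal S ∧ a ≠ 0 ∧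
      Val (algebraMap S K a) = n} e)
    (I : Ideal S)
    (g : ℤ)
    (hg : IsGreatest {n : ℤ | ∃ a : K, a ≠ 0 ∧
      a ∉ (algebraMap S K) '' (I : Set S) ∧ Val a = n} g)
    (s : ℕ)
    (hs : IsGreatest {n : ℕ |
        ((maximalIdeal S).map (Ideal.Quotient.mk I)) ^ n ≠ ⊥} s) :
    (s : ℤ) ≤ (s : ℤ) * e ∧ (s : ℤ) * e ≤ g := by
  have hv : IsValuationWithUniformizer t Val := hVal
  have hinj : Function.Injective (algebraMap S K) := IsFractionRing.injective S K
  have he1 : 1 ≤ e := by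
    obtain ⟨a, ha, ha0, rfl⟩ := he.1
    exact hv.one_le_of_mem_maximalIdeal ht hinj ha ha0
  obtain ⟨m, rfl⟩ := Int.eq_ofNat_of_zero_le (by omega : 0 ≤ e)
  obtain ⟨b, hbs, hbI⟩ : ∃ b ∈ maximalIdeal S ^ s, b ∉ I := by
    have hsI := hs.1
    rwa [Set.mem_ofPred_eq, ← Ideal.map_pow, Ne, Ideal.map_eq_bot_iff_le_ker, Ideal.mk_ker,
      SetLike.not_le_iff_exists] at hsI
  have hb0 : algebraMap S K b ≠ 0 := (map_ne_zero_iff _ hinj).mpr fun h => hbI (h ▸ I.zero_mem)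
  have hbe : ((m * s : ℕ) : ℤ) ≤ Val (algebraMap S K b) :=
    hv.le_of_mem_pow ht (fun a ha ha0 => he.2 ⟨a, ha, fun h => ha0 (by simp [h]), rfl⟩) hbs hb0
  have hbg : Val (algebraMap S K b) ≤ g := hg.2 ⟨_, hb0, hinj.mem_set_image.not.mpr hbI, rfl⟩
  push_cast at hbe
  constructor <;> nlinarith

/-- In the analytically irreducible, residually rational setting, with
`e = min{Val a ∣ a ∈ 𝔫, a ≠ 0}` the multiplicity of `S`, for every `𝔫`-primary ideal
`I` of `S` one has `s(S/I) ≤ s(S/I)·e ≤ g(I)`. -/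
theorem socle_degree_mul_multiplicity_le_frobenius
    (S : Type*) [CommRing S] [IsDomain S] [IsNoetherianRing S] [IsLocalRing S]
    (hdim : ringKrullDim S = 1)
    (hreg : Module.finrank (ResidueField S) (CotangentSpace S) ≠ 1)
    (hk : Infinite (ResidueField S))
    (K : Type*) [Field K] [Algebra S K] [IsFractionRing S K]
    [IsDiscreteValuationRing ↥(integralClosure S K)]
    [Module.Finite S ↥(integralClosure S K)]
    (hres : ∀ x : ↥(integralClosure S K), ∃ a : S,
      x - algebraMap S ↥(integralClosure S K) a ∈ maximalIdeal ↥(integralClosure S K))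
    (t : ↥(integralClosure S K)) (ht : Irreducible t)
    (Val : K → ℤ)
    (hVal : ∀ a : K, a ≠ 0 → ∃ u : (↥(integralClosure S K))ˣ,
      a = ((u : ↥(integralClosure S K)) : K) * (t : K) ^ (Val a))
    (e : ℤ)
    (he : IsLeast {n : ℤ | ∃ a : S, a ∈ maximalIdeal S ∧ a ≠ 0 ∧
      Val (algebraMap S K a) = n} e)
    (I : Ideal S) (hprim : I.radical = maximalIdeal S)
    (g : ℤ)
    (hg : IsGreatest {n : ℤ | ∃ a : K, a ≠ 0 ∧
      a ∉ (algebraMap S K) '' (I : Set S) ∧ Val a = n} g)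
    (s : ℕ)
    (hs : IsGreatest {n : ℕ |
        ((maximalIdeal S).map (Ideal.Quotient.mk I)) ^ n ≠ ⊥} s) :
    (s : ℤ) ≤ (s : ℤ) * e ∧ (s : ℤ) * e ≤ g :=
  socle_degree_mul_multiplicity_le_frobenius_general S K t ht Val hVal e he I g hg s hs
end

section
/- Let (S, 𝔫) be a one-dimensional Noetherian local domain, not regular, with infinite residue field and quotient field K, whose integral closure S̄ in K is a discrete valuation ring and a finitely generated S-module, and such that S ⊆ S̄ induces an isomorphism of residue fields. Let δ = ℓ_S(S̄/S). Then for every 𝔫-primary ideal I of S: g(I) + 1 ≤ ℓ_S(S/I) + 2δ, where g(I) is the Frobenius number of I. -/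
open IsLocalRing

/-!
Write `v(I) ⊆ v(S) ⊆ ℕ` for the sets of values of the nonzero elements of `I` and of `S`, and
sort the `g + 1` integers of `[0, g]` into gaps of `v(S)`, elements of `v(S) \ v(I)` and
elements of `v(I)`. For `S`-modules `N ⊆ M` inside `K`, the value filtration jumps modulo `N`
at every value of `M` that is not a value of `N`, so `#(v(M) \ v(N)) ≤ ℓ(M/N)`: there are at
most `δ` gaps (take `S ⊆ S̄`, where `v(S̄) = ℕ`) and at most `ℓ(S/I)` elements of
`v(S) \ v(I)`. Since `S` and `S̄` have the same residue field, an element of value `g` in `I`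
would let us write every element of value `g` as a multiple of it plus an element of larger
value, which lies in `I` by maximality of `g`; hence `g ∉ v(I)`, and as `v(S) + v(I) ⊆ v(I)`,
`n ↦ g - n` maps the elements of `v(I)` in `[0, g]` injectively to gaps.
-/

open Finset

lemma Subalgebra.coe_units_inv {R A : Type*} [CommSemiring R] [DivisionRing A] [Algebra R A]
    {O : Subalgebra R A} (u : Oˣ) : ((↑u⁻¹ : O) : A) = ((u : O) : A)⁻¹ :=
  map_units_inv O.val u

theorem card_le_height_of_antitone {β : Type*} [Preorder β] {G : ℤ → β} (hG : Antitone G)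
    {T : Finset ℤ} (hT : ∀ m ∈ T, G (m + 1) < G m) {N : ℤ} (hN : ∀ m ∈ T, N ≤ m) :
    (#T : ℕ∞) ≤ Order.height (G N) := by
  induction T using Finset.induction_on_min generalizing N with
  | empty => simp
  | insert a s has ih =>
    have ha : a ∈ insert a s := mem_insert_self a s
    have hs : (#s : ℕ∞) ≤ Order.height (G (a + 1)) :=
      ih (fun m hm => hT m (mem_insert_of_mem hm)) (fun m hm => has m hm)
    rw [card_insert_of_notMem (fun h => lt_irrefl a (has a h)), Nat.cast_add, Nat.cast_one]
    calc (#s : ℕ∞) + 1 ≤ Order.height (G (a + 1)) + 1 := by gcongr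
      _ ≤ Order.height (G a) := Order.height_add_one_le (hT a ha)
      _ ≤ Order.height (G N) := Order.height_mono (hG (hN a ha))

theorem card_le_moduleLength_of_not_le_sup {R M : Type*} [Ring R] [AddCommGroup M] [Module R M]
    {P : Submodule R M} {F : ℤ → Submodule R M} (hF : Antitone F) {T : Finset ℤ}
    (hT : ∀ m ∈ T, ¬F m ≤ F (m + 1) ⊔ P) {ℓ : ℕ}
    (hℓ : moduleLength R (M ⧸ P) = (ℓ : ℕ∞)) :
    #T ≤ ℓ := by
  obtain ⟨N, hN⟩ := T.bddBelow
  have hG : Antitone fun m => (F m).map P.mkQ := fun m m' h => Submodule.map_mono (hF h)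
  have hlt : ∀ m ∈ T, (F (m + 1)).map P.mkQ < (F m).map P.mkQ := fun m hm =>
    (hG (Int.le_add_one le_rfl)).lt_of_not_ge fun hle => hT m hm <| by
      simpa [Submodule.comap_map_mkQ, sup_comm] using Submodule.comap_mono (f := P.mkQ) hle
  have hcard : ((#T : ℕ∞) : WithBot ℕ∞) ≤ (ℓ : ℕ∞) :=
    hℓ ▸ (WithBot.coe_le_coe.mpr (card_le_height_of_antitone hG hlt hN)).trans
      (Order.height_le_krullDim _)
  exact_mod_cast hcard

theorem add_one_le_card_add_two_mul_card (g : ℤ) {V W : Set ℤ} [DecidablePred (· ∈ V)]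
    [DecidablePred (· ∈ W)] (hVW : V ⊆ W) (hsymm : ∀ n ∈ V, g - n ∉ W) :
    g + 1 ≤ #{n ∈ Icc 0 g | n ∈ W ∧ n ∉ V} + 2 * #{n ∈ Icc 0 g | n ∉ W} := by
  have hW := card_filter_add_card_filter_not (s := Icc 0 g) (· ∈ W)
  have hV : #{n ∈ Icc 0 g | n ∈ V} + #{n ∈ Icc 0 g | n ∈ W ∧ n ∉ V} =
      #{n ∈ Icc 0 g | n ∈ W} := by
    rw [← card_filter_add_card_filter_not (s := {n ∈ Icc 0 g | n ∈ W}) (· ∈ V),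
      filter_filter, filter_filter]
    congr 2
    ext n
    simp only [mem_filter]
    exact ⟨fun h => ⟨h.1, hVW h.2, h.2⟩, fun h => ⟨h.1, h.2.2⟩⟩
  have hreflect : #{n ∈ Icc 0 g | n ∈ V} ≤ #{n ∈ Icc 0 g | n ∉ W} := by
    refine card_le_card_of_injOn (g - ·) (fun n hn => ?_) (fun _ _ _ _ h => by simpa using h)
    simp only [coe_filter, mem_Icc, Set.mem_ofPred_eq] at hn ⊢
    exact ⟨⟨by omega, by omega⟩, hsymm n hn.2⟩
  have hcard : g + 1 ≤ #(Icc 0 g) := by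
    rw [Int.card_Icc]
    omega
  omega

def valueSet {S M K : Type*} [Semiring S] [AddCommMonoid M] [Module S M] [AddCommMonoid K]
    [Module S K] (Val : K → ℤ) (φ : M →ₗ[S] K) (P : Submodule S M) : Set ℤ :=
  {n | ∃ x ∈ P, φ x ≠ 0 ∧ Val (φ x) = n}

structure IsUniformizerValuation {S K : Type*} [CommRing S] [Field K] [Algebra S K]
    (O : Subalgebra S K) (t : O) (Val : K → ℤ) : Prop where
  irreducible : Irreducible t
  exists_eq_unit_mul_zpow : ∀ a : K, a ≠ 0 → ∃ u : Oˣ, a = ((u : O) : K) * (t : K) ^ Val a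

namespace IsUniformizerValuation

variable {S K : Type*} [CommRing S] [Field K] [Algebra S K] {O : Subalgebra S K} {t : O}
  {Val : K → ℤ} (hv : IsUniformizerValuation O t Val)
include hv

lemma coe_ne_zero : (t : K) ≠ 0 := by
  exact_mod_cast hv.irreducible.ne_zero

lemma eq_zero_of_zpow_eq_coe_unit {k : ℤ} {u : Oˣ} (h : (t : K) ^ k = ((u : O) : K)) :
    k = 0 := by
  have hnat : ∀ (n : ℕ) (w : Oˣ), (t : K) ^ n = ((w : O) : K) → n = 0 := fun n w hw => by
    have htw : t ^ n = w := Subtype.val_injective (by simpa using hw)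
    by_contra hn
    exact hv.irreducible.not_isUnit ((isUnit_pow_iff hn).mp (htw ▸ w.isUnit))
  obtain ⟨n, rfl | rfl⟩ := Int.eq_nat_or_neg k
  · exact_mod_cast hnat n u (by simpa using h)
  · rw [hnat n u⁻¹ (by rw [Subalgebra.coe_units_inv, ← h, zpow_neg, inv_inv, zpow_natCast])]
    rfl

lemma val_unit_mul_zpow (u : Oˣ) (n : ℤ) : Val (((u : O) : K) * (t : K) ^ n) = n := by
  have ht0 := hv.coe_ne_zero
  have hu : ((u : O) : K) ≠ 0 := by exact_mod_cast u.ne_zero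
  obtain ⟨w, hw⟩ := hv.exists_eq_unit_mul_zpow _ (mul_ne_zero hu (zpow_ne_zero n ht0))
  have hw0 : ((w : O) : K) ≠ 0 := by exact_mod_cast w.ne_zero
  have hquot : (t : K) ^ (Val (((u : O) : K) * (t : K) ^ n) - n) = ((↑(u * w⁻¹) : O) : K) := by
    rw [Units.val_mul, Subalgebra.coe_mul, Subalgebra.coe_units_inv, zpow_sub₀ ht0]
    field_simp
    linear_combination -hw
  linarith [hv.eq_zero_of_zpow_eq_coe_unit hquot]

lemma val_zpow (n : ℤ) : Val ((t : K) ^ n) = n := by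
  simpa using hv.val_unit_mul_zpow 1 n

lemma val_coe_of_isUnit {x : O} (hx : IsUnit x) : Val (x : K) = 0 := by
  obtain ⟨u, rfl⟩ := hx
  simpa using hv.val_unit_mul_zpow u 0

lemma val_mul {a b : K} (ha : a ≠ 0) (hb : b ≠ 0) : Val (a * b) = Val a + Val b := by
  obtain ⟨u, hu⟩ := hv.exists_eq_unit_mul_zpow a ha
  obtain ⟨w, hw⟩ := hv.exists_eq_unit_mul_zpow b hb
  rw [← hv.val_unit_mul_zpow (u * w) (Val a + Val b)]
  congr 1
  rw [zpow_add₀ hv.coe_ne_zero, Units.val_mul, Subalgebra.coe_mul]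
  conv_lhs => rw [hu, hw]
  ring

lemma val_neg {a : K} (ha : a ≠ 0) : Val (-a) = Val a := by
  rw [← neg_one_mul, hv.val_mul (neg_ne_zero.mpr one_ne_zero) ha,
    show (-1 : K) = ((-1 : O) : K) by simp, hv.val_coe_of_isUnit isUnit_one.neg, zero_add]

lemma val_div {a b : K} (ha : a ≠ 0) (hb : b ≠ 0) : Val (a / b) = Val a - Val b := by
  have h := hv.val_mul (div_ne_zero ha hb) hb
  rw [div_mul_cancel₀ a hb] at h
  omega

lemma exists_coe_eq_of_val_nonneg {a : K} (ha : a ≠ 0) (h : 0 ≤ Val a) :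
    ∃ x : O, (x : K) = a := by
  obtain ⟨u, hu⟩ := hv.exists_eq_unit_mul_zpow a ha
  lift Val a to ℕ using h with n
  exact ⟨u * t ^ n, by simp [hu]⟩

lemma add_mem_valueSet {I : Ideal S} {m n : ℤ}
    (hm : m ∈ valueSet Val (Algebra.linearMap S K) ⊤)
    (hn : n ∈ valueSet Val (Algebra.linearMap S K) I) :
    m + n ∈ valueSet Val (Algebra.linearMap S K) I := by
  obtain ⟨s, -, hs0, rfl⟩ := hm
  obtain ⟨c, hc, hc0, rfl⟩ := hn
  exact ⟨s * c, I.mul_mem_left s hc, by simpa using mul_ne_zero hs0 hc0,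
    by simpa using hv.val_mul hs0 hc0⟩

section DiscreteValuationRing

variable [IsDiscreteValuationRing O]

lemma exists_val_coe_eq {x : O} (hx : x ≠ 0) :
    ∃ n : ℕ, ∃ u : Oˣ, x = u * t ^ n ∧ Val (x : K) = n := by
  obtain ⟨n, u, rfl⟩ := IsDiscreteValuationRing.eq_unit_mul_pow_irreducible hx hv.irreducible
  exact ⟨n, u, rfl, by simpa using hv.val_unit_mul_zpow u n⟩

lemma val_coe_nonneg {x : O} (hx : x ≠ 0) : 0 ≤ Val (x : K) := by
  obtain ⟨n, -, -, hn⟩ := hv.exists_val_coe_eq hx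
  omega

lemma one_le_val_coe {x : O} (hx : x ≠ 0) (hxm : x ∈ maximalIdeal O) : 1 ≤ Val (x : K) := by
  obtain ⟨n, u, rfl, hn⟩ := hv.exists_val_coe_eq hx
  rcases n with _ | n
  · exact absurd (by simp) hxm
  · omega

lemma le_val_add {a b : K} (ha : a ≠ 0) (hb : b ≠ 0) (hab : a + b ≠ 0) (h : Val a ≤ Val b) :
    Val a ≤ Val (a + b) := by
  obtain ⟨x, hx⟩ := hv.exists_coe_eq_of_val_nonneg (div_ne_zero hb ha)
    (by rw [hv.val_div hb ha]; omega)
  have hsum : a + b = a * ((1 + x : O) : K) := by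
    push_cast
    rw [hx]
    field_simp
  have h1x : (1 + x : O) ≠ 0 := fun h0 => hab (by rw [hsum, h0]; simp)
  rw [hsum, hv.val_mul ha (by exact_mod_cast h1x)]
  linarith [hv.val_coe_nonneg h1x]

lemma min_le_val_add {a b : K} (ha : a ≠ 0) (hb : b ≠ 0) (hab : a + b ≠ 0) :
    min (Val a) (Val b) ≤ Val (a + b) := by
  rcases le_total (Val a) (Val b) with h | h
  · exact (min_le_left _ _).trans (hv.le_val_add ha hb hab h)
  · rw [add_comm] at hab ⊢
    exact (min_le_right _ _).trans (hv.le_val_add hb ha hab h)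

lemma val_add_eq_of_lt {a b : K} (ha : a ≠ 0) (hb : b ≠ 0) (h : Val a < Val b) :
    Val (a + b) = Val a := by
  obtain ⟨x, hx⟩ := hv.exists_coe_eq_of_val_nonneg (div_ne_zero hb ha)
    (by rw [hv.val_div hb ha]; omega)
  have hxm : x ∈ maximalIdeal O := fun hu => by
    have := hv.val_coe_of_isUnit hu
    rw [hx, hv.val_div hb ha] at this
    omega
  have hunit : IsUnit (1 + x) := by
    simpa using isUnit_one_sub_self_of_mem_nonunits (-x) (neg_mem hxm)
  have hsum : a + b = a * ((1 + x : O) : K) := by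
    push_cast
    rw [hx]
    field_simp
  rw [hsum, hv.val_mul ha (by exact_mod_cast hunit.ne_zero), hv.val_coe_of_isUnit hunit,
    add_zero]

lemma exists_val_lt_sub_mul
    (hres : ∀ x : O, ∃ s : S, x - algebraMap S O s ∈ maximalIdeal O)
    {a c : K} (ha : a ≠ 0) (hc : c ≠ 0) (h : Val a = Val c) :
    ∃ s : S, a - algebraMap S K s * c ≠ 0 → Val a < Val (a - algebraMap S K s * c) := by
  obtain ⟨x, hx⟩ := hv.exists_coe_eq_of_val_nonneg (div_ne_zero ha hc)
    (by rw [hv.val_div ha hc]; omega)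
  obtain ⟨s, hs⟩ := hres x
  refine ⟨s, fun hne => ?_⟩
  have hform : a - algebraMap S K s * c = c * ((x - algebraMap S O s : O) : K) := by
    push_cast [Subalgebra.coe_algebraMap]
    rw [hx]
    field_simp
  have hd : x - algebraMap S O s ≠ 0 := fun h0 => hne (by rw [hform, h0]; simp)
  rw [hform, hv.val_mul hc (by exact_mod_cast hd)]
  linarith [hv.one_le_val_coe hd hs]

def filtration (m : ℤ) : Submodule S K where
  carrier := {a | a = 0 ∨ m ≤ Val a}
  zero_mem' := Or.inl rfl
  add_mem' {a b} ha hb := by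
    by_cases ha0 : a = 0
    · simpa [ha0] using hb
    by_cases hb0 : b = 0
    · simpa [hb0] using ha
    by_cases hab : a + b = 0
    · exact Or.inl hab
    have := hv.min_le_val_add ha0 hb0 hab
    have := ha.resolve_left ha0
    have := hb.resolve_left hb0
    exact Or.inr (by omega)
  smul_mem' s a ha := by
    by_cases hsa : s • a = 0
    · exact Or.inl hsa
    have ha0 : a ≠ 0 := fun h => hsa (by rw [h, smul_zero])
    rw [Algebra.smul_def, ← Subalgebra.coe_algebraMap O] at hsa ⊢
    have hs0 : algebraMap S O s ≠ 0 := fun h => hsa (by rw [h]; simp)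
    refine Or.inr ?_
    rw [hv.val_mul (by exact_mod_cast hs0) ha0]
    linarith [hv.val_coe_nonneg hs0, ha.resolve_left ha0]

lemma filtration_antitone : Antitone hv.filtration := fun _ _ h _ ha =>
  ha.imp_right h.trans

lemma sub_ne_zero_and_val_sub_eq {a b : K} (ha : a ≠ 0) (hb : b ∈ hv.filtration (Val a + 1)) :
    a - b ≠ 0 ∧ Val (a - b) = Val a := by
  by_cases hb0 : b = 0
  · simp [hb0, ha]
  have hlt : Val a < Val b := by
    have := hb.resolve_left hb0
    omega
  refine ⟨fun h => hlt.ne (by rw [sub_eq_zero.mp h]), ?_⟩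
  rw [sub_eq_add_neg, hv.val_add_eq_of_lt ha (neg_ne_zero.mpr hb0) (by rwa [hv.val_neg hb0])]

theorem card_le_of_valueSet_sdiff {M : Type*} [AddCommGroup M] [Module S M] (φ : M →ₗ[S] K)
    (P : Submodule S M) {T : Finset ℤ}
    (hT : ∀ m ∈ T, m ∈ valueSet Val φ ⊤ ∧ m ∉ valueSet Val φ P) {ℓ : ℕ}
    (hℓ : moduleLength S (M ⧸ P) = (ℓ : ℕ∞)) : #T ≤ ℓ := by
  refine card_le_moduleLength_of_not_le_sup (F := fun m => (hv.filtration m).comap φ)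
    (fun _ _ h => Submodule.comap_mono (hv.filtration_antitone h)) (fun m hm hle => ?_) hℓ
  obtain ⟨⟨x, -, hx0, rfl⟩, hP⟩ := hT m hm
  obtain ⟨y, hy, p, hp, rfl⟩ := Submodule.mem_sup.mp (hle (Or.inr le_rfl))
  have hφp : φ p = φ (y + p) - φ y := by simp
  exact hP ⟨p, hp, hφp ▸ hv.sub_ne_zero_and_val_sub_eq hx0 hy⟩

theorem card_le_of_notMem_valueSet {T : Finset ℤ}
    (hT : ∀ m ∈ T, 0 ≤ m ∧ m ∉ valueSet Val (Algebra.linearMap S K) ⊤) {δ : ℕ}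
    (hδ : moduleLength S (O ⧸ LinearMap.range (Algebra.linearMap S O)) = (δ : ℕ∞)) :
    #T ≤ δ := by
  refine hv.card_le_of_valueSet_sdiff O.val.toLinearMap _ (fun m hm => ⟨?_, ?_⟩) hδ
  · lift m to ℕ using (hT m hm).1
    exact ⟨t ^ m, trivial, by simpa using pow_ne_zero m hv.coe_ne_zero,
      by simpa using hv.val_zpow m⟩
  · rintro ⟨_, ⟨s, rfl⟩, hs⟩
    exact (hT m hm).2 ⟨s, trivial, hs⟩

theorem frobenius_notMem_valueSet
    (hres : ∀ x : O, ∃ s : S, x - algebraMap S O s ∈ maximalIdeal O) {I : Ideal S} {g : ℤ}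
    (hg : IsGreatest
      {n : ℤ | ∃ a : K, a ≠ 0 ∧ a ∉ (algebraMap S K) '' (I : Set S) ∧ Val a = n} g) :
    g ∉ valueSet Val (Algebra.linearMap S K) I := by
  rintro ⟨c, hcI, hc0, hcg⟩
  obtain ⟨a, ha0, haI, rfl⟩ := hg.1
  rw [Algebra.linearMap_apply] at hc0 hcg
  obtain ⟨s, hs⟩ := hv.exists_val_lt_sub_mul hres ha0 hc0 hcg.symm
  have hrest : a - algebraMap S K s * algebraMap S K c ∈ algebraMap S K '' I := by
    by_contra hnot
    by_cases h0 : a - algebraMap S K s * algebraMap S K c = 0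
    · exact hnot ⟨0, I.zero_mem, by rw [map_zero, h0]⟩
    · exact (hs h0).not_ge (hg.2 ⟨_, h0, hnot, rfl⟩)
  obtain ⟨r, hrI, hr⟩ := hrest
  exact haI ⟨r + s * c, I.add_mem hrI (I.mul_mem_left s hcI),
    by rw [map_add, map_mul, hr]; ring⟩

end DiscreteValuationRing

end IsUniformizerValuation

theorem frobenius_add_one_le_general
    (S : Type*) [CommRing S]
    (K : Type*) [Field K] [Algebra S K]
    [IsDiscreteValuationRing ↥(integralClosure S K)]
    (hres : ∀ x : ↥(integralClosure S K), ∃ a : S,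
      x - algebraMap S ↥(integralClosure S K) a ∈ maximalIdeal ↥(integralClosure S K))
    (t : ↥(integralClosure S K)) (ht : Irreducible t)
    (Val : K → ℤ)
    (hVal : ∀ a : K, a ≠ 0 → ∃ u : (↥(integralClosure S K))ˣ,
      a = ((u : ↥(integralClosure S K)) : K) * (t : K) ^ (Val a))
    (δ : ℕ)
    (hδ : moduleLength S
        (↥(integralClosure S K) ⧸
          LinearMap.range (Algebra.linearMap S ↥(integralClosure S K))) = (δ : ℕ∞))
    (I : Ideal S)
    (ℓ : ℕ) (hℓ : moduleLength S (S ⧸ I) = (ℓ : ℕ∞))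
    (g : ℤ)
    (hg : IsGreatest {n : ℤ | ∃ a : K, a ≠ 0 ∧
      a ∉ (algebraMap S K) '' (I : Set S) ∧ Val a = n} g) :
    g + 1 ≤ (ℓ : ℤ) + 2 * (δ : ℤ) := by
  classical
  have hv : IsUniformizerValuation (integralClosure S K) t Val := ⟨ht, hVal⟩
  set vS := valueSet Val (Algebra.linearMap S K) ⊤
  set vI := valueSet Val (Algebra.linearMap S K) I
  have hgaps : #{n ∈ Icc 0 g | n ∉ vS} ≤ δ :=
    hv.card_le_of_notMem_valueSet
      (fun m hm => ⟨(mem_Icc.mp (mem_filter.mp hm).1).1, (mem_filter.mp hm).2⟩) hδ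
  have hdiff : #{n ∈ Icc 0 g | n ∈ vS ∧ n ∉ vI} ≤ ℓ :=
    hv.card_le_of_valueSet_sdiff _ I (fun m hm => (mem_filter.mp hm).2) hℓ
  have hcount := add_one_le_card_add_two_mul_card g (V := vI) (W := vS)
    (fun n ⟨x, _, hx⟩ => ⟨x, trivial, hx⟩)
    (fun n hn hgn => hv.frobenius_notMem_valueSet hres hg
      (by simpa using hv.add_mem_valueSet hgn hn))
  omega

/-- In the analytically irreducible, residually rational setting, with
`δ = ℓ_S(S̄/S)`, for every `𝔫`-primary ideal `I` of `S` one has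
`g(I) + 1 ≤ ℓ_S(S/I) + 2δ`. -/
theorem frobenius_add_one_le
    (S : Type*) [CommRing S] [IsDomain S] [IsNoetherianRing S] [IsLocalRing S]
    (hdim : ringKrullDim S = 1)
    (hreg : Module.finrank (ResidueField S) (CotangentSpace S) ≠ 1)
    (hk : Infinite (ResidueField S))
    (K : Type*) [Field K] [Algebra S K] [IsFractionRing S K]
    [IsDiscreteValuationRing ↥(integralClosure S K)]
    [Module.Finite S ↥(integralClosure S K)]
    (hres : ∀ x : ↥(integralClosure S K), ∃ a : S,
      x - algebraMap S ↥(integralClosure S K) a ∈ maximalIdeal ↥(integralClosure S K))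
    (t : ↥(integralClosure S K)) (ht : Irreducible t)
    (Val : K → ℤ)
    (hVal : ∀ a : K, a ≠ 0 → ∃ u : (↥(integralClosure S K))ˣ,
      a = ((u : ↥(integralClosure S K)) : K) * (t : K) ^ (Val a))
    (δ : ℕ)
    (hδ : moduleLength S
        (↥(integralClosure S K) ⧸
          LinearMap.range (Algebra.linearMap S ↥(integralClosure S K))) = (δ : ℕ∞))
    (I : Ideal S) (hprim : I.radical = maximalIdeal S)
    (ℓ : ℕ) (hℓ : moduleLength S (S ⧸ I) = (ℓ : ℕ∞))
    (g : ℤ)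
    (hg : IsGreatest {n : ℤ | ∃ a : K, a ≠ 0 ∧
      a ∉ (algebraMap S K) '' (I : Set S) ∧ Val a = n} g) :
    g + 1 ≤ (ℓ : ℤ) + 2 * (δ : ℤ) :=
  frobenius_add_one_le_general S K hres t ht Val hVal δ hδ I ℓ hℓ g hg
end

section
/- Let (S, 𝔫) be a one-dimensional Noetherian local domain, not regular, with infinite residue field and quotient field K, whose integral closure S̄ in K is a discrete valuation ring and a finitely generated S-module, and such that S ⊆ S̄ induces an isomorphism of residue fields. Let δ = ℓ_S(S̄/S). Then for every 𝔫-primary ideal I of S: ℓ_S(I/𝔠_I) ≤ δ, where 𝔠_I = (I :_K S̄) is the largest S̄-ideal contained in I. -/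
/-!
Let `v` be the valuation of the discrete valuation ring `S̄` and `𝔪` its maximal ideal. For `I ≠ 0`,
since `S̄` is a finite `S`-module, the conductor `𝔠_I` is `𝔪 ^ c` for some `c`. Because
`S` and `S̄` have the same residue field, an `S`-submodule of `S̄` containing `𝔪 ^ c` is recovered,
inside any larger one, from its values below `c`; so a strict chain of submodules between `𝔠_I`
and `I` is at most as long as the number of values `m < c` of elements of `I`. For each such `m`,
`c - 1 - m` is a gap of the value semigroup `v(S)`: otherwise `I` would contain an element of value
`c - 1`, and then all of `𝔪 ^ (c - 1)`. Finally every gap `g` gives a strict inclusion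
`S + 𝔪 ^ (g + 1) < S + 𝔪 ^ g`, so `ℓ_S(S̄/S)` is at least the number of gaps.
-/

open IsLocalRing

open Finset

namespace Order

theorem card_le_krullDim_of_antitone {α : Type*} [Preorder α] {f : ℕ → α} (hf : Antitone f)
    (s : Finset ℕ) (hs : ∀ i ∈ s, f (i + 1) < f i) : (#s : WithBot ℕ∞) ≤ krullDim α := by
  have key : ∀ m, ∃ p : LTSeries α, f m ≤ p.head ∧ #(s ∩ range m) ≤ p.length := by
    intro m
    induction m with
    | zero => exact ⟨RelSeries.singleton _ (f 0), le_rfl, by simp⟩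
    | succ m ih =>
      obtain ⟨p, hp, hlen⟩ := ih
      by_cases hm : m ∈ s
      · refine ⟨p.cons (f (m + 1)) ((hs m hm).trans_le hp), le_rfl, ?_⟩
        rw [range_add_one, inter_insert_of_mem hm, card_insert_of_notMem (by simp)]
        simpa using hlen
      · refine ⟨p, (hf m.le_succ).trans hp, ?_⟩
        rwa [range_add_one, inter_insert_of_notMem hm]
  obtain ⟨p, -, hlen⟩ := key (s.sup id + 1)
  rw [inter_eq_left.mpr fun i hi => mem_range_succ_iff.mpr (le_sup (f := id) hi)] at hlen
  exact (by exact_mod_cast hlen : (#s : WithBot ℕ∞) ≤ p.length).trans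
    (LTSeries.length_le_krullDim p)

theorem krullDim_le_card_of_strictMono {α β : Type*} [Preorder α] {f : α → Finset β}
    (hf : StrictMono f) (t : Finset β) (ht : ∀ a, f a ⊆ t) : krullDim α ≤ #t := by
  refine iSup_le fun p => ?_
  have hcard : StrictMono fun i => #(f (p i)) := card_strictMono.comp (hf.comp p.strictMono)
  have := Fintype.card_le_of_injective
    (fun i => (⟨#(f (p i)), Nat.lt_succ_of_le (card_le_card (ht _))⟩ : Fin (#t + 1)))
    fun i j hij => hcard.injective (Fin.mk.inj_iff.mp hij)
  simp only [Fintype.card_fin, add_le_add_iff_right] at this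
  exact_mod_cast this

end Order

theorem Submodule.krullDim_quotient_le_krullDim_Icc {R M N : Type*} [Ring R] [AddCommGroup M]
    [Module R M] [AddCommGroup N] [Module R N] {f : M →ₗ[R] N} (hf : Function.Injective f)
    (W : Submodule R M) :
    Order.krullDim (Submodule R (M ⧸ W)) ≤ Order.krullDim (Set.Icc (W.map f) (LinearMap.range f)) :=
  Order.krullDim_le_of_strictMono
    (fun P => ⟨(P.comap W.mkQ).map f, map_mono (W.le_comap_mkQ P), LinearMap.map_le_range⟩)
    fun _ _ h => map_strictMono_of_injective hf ((comapMkQOrderEmbedding W).strictMono h)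

theorem IsDiscreteValuationRing.mem_maximalIdeal_pow_iff {R : Type*} [CommRing R] [IsDomain R]
    [IsDiscreteValuationRing R] {x : R} {k : ℕ} :
    x ∈ IsLocalRing.maximalIdeal R ^ k ↔ (k : ℕ∞) ≤ addVal R x := by
  obtain ⟨π, hπ⟩ := exists_irreducible R
  rw [hπ.maximalIdeal_eq, Ideal.span_singleton_pow, Ideal.mem_span_singleton,
    ← addVal_le_iff_dvd, hπ.addVal_pow]

open IsDiscreteValuationRing (addVal addVal_le_iff_dvd addVal_eq_zero_iff exists_irreducible
  mem_maximalIdeal_pow_iff)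

namespace Submodule

variable {S R : Type*} [CommRing S] [CommRing R] [IsDomain R] [IsDiscreteValuationRing R]
  [Algebra S R]

-- `addVal R 0 = ⊤`, so only nonzero elements contribute values.
def valueSet (N : Submodule S R) : Set ℕ := {k | ∃ x ∈ N, addVal R x = k}

theorem valueSet_mono {N N' : Submodule S R} (h : N ≤ N') : valueSet N ⊆ valueSet N' :=
  fun _ ⟨x, hx, hxk⟩ => ⟨x, h hx, hxk⟩

theorem add_mem_valueSet {N : Submodule S R} {m g : ℕ} (hm : m ∈ valueSet N)
    (hg : g ∈ valueSet (1 : Submodule S R)) : g + m ∈ valueSet N := by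
  obtain ⟨x, hxN, hx⟩ := hm
  obtain ⟨_, hs1, hs⟩ := hg
  obtain ⟨s, rfl⟩ := mem_one.mp hs1
  refine ⟨s • x, N.smul_mem s hxN, ?_⟩
  rw [Algebra.smul_def, AddValuation.map_mul, hs, hx]
  rfl

theorem exists_addVal_add_one_le_sub_smul
    (hres : ∀ x : R, ∃ a : S, x - algebraMap S R a ∈ maximalIdeal R) {y z : R} (h : y ∣ z) :
    ∃ a : S, addVal R y + 1 ≤ addVal R (z - a • y) := by
  obtain ⟨e, rfl⟩ := h
  obtain ⟨a, ha⟩ := hres e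
  refine ⟨a, ?_⟩
  rw [Algebra.smul_def, show y * e - algebraMap S R a * y = y * (e - algebraMap S R a) by ring,
    AddValuation.map_mul]
  exact add_le_add_right (Order.one_le_iff_ne_zero.mpr fun h0 =>
    (mem_maximalIdeal _).mp ha (addVal_eq_zero_iff.mp h0)) _

theorem pow_inf_le_of_pow_succ_inf_le
    (hres : ∀ x : R, ∃ a : S, x - algebraMap S R a ∈ maximalIdeal R) {N N' : Submodule S R}
    (hNN' : N ≤ N') {k : ℕ} (hk : (maximalIdeal R ^ (k + 1)).restrictScalars S ⊓ N' ≤ N)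
    (hval : k ∈ valueSet N' → k ∈ valueSet N) :
    (maximalIdeal R ^ k).restrictScalars S ⊓ N' ≤ N := by
  rintro x ⟨hxk, hxN'⟩
  rw [SetLike.mem_coe, restrictScalars_mem, mem_maximalIdeal_pow_iff] at hxk
  rcases hxk.lt_or_eq with hlt | hxv
  · refine hk ⟨mem_maximalIdeal_pow_iff.mpr ?_, hxN'⟩
    exact_mod_cast (ENat.add_one_le_iff (ENat.natCast_ne_top k)).mpr hlt
  obtain ⟨y, hyN, hy⟩ := hval ⟨x, hxN', hxv.symm⟩
  obtain ⟨a, ha⟩ := exists_addVal_add_one_le_sub_smul hres (addVal_le_iff_dvd.mp (hy.trans hxv).le)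
  rw [hy] at ha
  have hsub : x - a • y ∈ N :=
    hk ⟨mem_maximalIdeal_pow_iff.mpr (by exact_mod_cast ha),
      N'.sub_mem hxN' (hNN' (N.smul_mem a hyN))⟩
  simpa using N.add_mem hsub (N.smul_mem a hyN)

theorem le_of_pow_le_of_valueSet_subset
    (hres : ∀ x : R, ∃ a : S, x - algebraMap S R a ∈ maximalIdeal R) {N N' : Submodule S R}
    (hNN' : N ≤ N') {c : ℕ} (hc : (maximalIdeal R ^ c).restrictScalars S ≤ N)
    (hval : ∀ k < c, k ∈ valueSet N' → k ∈ valueSet N) : N' ≤ N := by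
  have key : ∀ j ≤ c, (maximalIdeal R ^ (c - j)).restrictScalars S ⊓ N' ≤ N := by
    intro j
    induction j with
    | zero => exact fun _ => inf_le_left.trans hc
    | succ j ih =>
      intro hj
      refine pow_inf_le_of_pow_succ_inf_le hres hNN' ?_ (hval _ (by omega))
      rw [show c - (j + 1) + 1 = c - j by omega]
      exact ih (by omega)
  simpa using key c le_rfl

theorem pow_le_of_mem_valueSet (hres : ∀ x : R, ∃ a : S, x - algebraMap S R a ∈ maximalIdeal R)
    {N : Submodule S R} {k : ℕ} (hk : k ∈ valueSet N)
    (hN : (maximalIdeal R ^ (k + 1)).restrictScalars S ≤ N) :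
    (maximalIdeal R ^ k).restrictScalars S ≤ N := by
  simpa using pow_inf_le_of_pow_succ_inf_le hres le_top (N' := ⊤) (k := k)
    (inf_le_left.trans hN) fun _ => hk

open scoped Classical in
theorem card_valueSet_le_card_notMem_valueSet_one
    (hres : ∀ x : R, ∃ a : S, x - algebraMap S R a ∈ maximalIdeal R) {M : Submodule S R} {c : ℕ}
    (hc : (maximalIdeal R ^ c).restrictScalars S ≤ M)
    (hmin : ∀ k < c, ¬(maximalIdeal R ^ k).restrictScalars S ≤ M) :
    #{m ∈ range c | m ∈ valueSet M} ≤ #{g ∈ range c | g ∉ valueSet (1 : Submodule S R)} := by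
  refine card_le_card_of_injOn (fun m => c - 1 - m) (fun m hm => ?_) fun m hm m' hm' h => ?_
  · simp only [coe_filter, mem_range, Set.mem_ofPred_eq] at hm ⊢
    refine ⟨by omega, fun hg => hmin (c - 1 - m + m) (by omega) ?_⟩
    refine pow_le_of_mem_valueSet hres (add_mem_valueSet hm.2 hg) ?_
    rwa [show c - 1 - m + m + 1 = c by omega]
  · simp only [coe_filter, mem_range, Set.mem_ofPred_eq] at hm hm' h
    omega

open scoped Classical in
theorem krullDim_Icc_le_card_notMem_valueSet_one
    (hres : ∀ x : R, ∃ a : S, x - algebraMap S R a ∈ maximalIdeal R) {L M : Submodule S R}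
    (hLM : L ≤ M) {c : ℕ} (hc : (maximalIdeal R ^ c).restrictScalars S ≤ L)
    (hmin : ∀ k < c, ¬(maximalIdeal R ^ k).restrictScalars S ≤ M) :
    Order.krullDim (Set.Icc L M) ≤ #{g ∈ range c | g ∉ valueSet (1 : Submodule S R)} := by
  let F : Set.Icc L M → Finset ℕ := fun N => {m ∈ range c | m ∈ valueSet N.1}
  have hF : StrictMono F := by
    refine fun N N' hlt => lt_of_le_of_ne
      (monotone_filter_right _ fun _ _ hm => valueSet_mono hlt.le hm) fun heq => hlt.not_ge ?_
    refine le_of_pow_le_of_valueSet_subset hres hlt.le (hc.trans N.2.1) fun k hk hk' => ?_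
    have : k ∈ F N' := mem_filter.mpr ⟨mem_range.mpr hk, hk'⟩
    exact (mem_filter.mp (heq ▸ this)).2
  refine (Order.krullDim_le_card_of_strictMono hF {m ∈ range c | m ∈ valueSet M}
    fun N => monotone_filter_right _ fun _ _ hm => valueSet_mono N.2.2 hm).trans ?_
  exact_mod_cast card_valueSet_le_card_notMem_valueSet_one hres (hc.trans hLM) hmin

theorem one_sup_pow_succ_lt {g : ℕ} (hg : g ∉ valueSet (1 : Submodule S R)) :
    1 ⊔ (maximalIdeal R ^ (g + 1)).restrictScalars S <
      1 ⊔ (maximalIdeal R ^ g).restrictScalars S := by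
  refine lt_of_le_of_ne (sup_le_sup_left ((restrictScalars_le S).mpr
    (Ideal.pow_le_pow_right g.le_succ)) _) fun h => hg ?_
  obtain ⟨π, hπ⟩ := exists_irreducible R
  have hmem : π ^ g ∈ 1 ⊔ (maximalIdeal R ^ g).restrictScalars S :=
    mem_sup_right (mem_maximalIdeal_pow_iff.mpr (hπ.addVal_pow g).ge)
  obtain ⟨y, hy, z, hz, hyz⟩ := mem_sup.mp (h ▸ hmem)
  have hz : ((g + 1 : ℕ) : ℕ∞) ≤ addVal R z := mem_maximalIdeal_pow_iff.mp hz
  refine ⟨y, hy, ?_⟩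
  rw [eq_sub_of_add_eq hyz, AddValuation.map_sub_eq_of_lt_left _ ?_, hπ.addVal_pow]
  rw [hπ.addVal_pow]
  exact lt_of_lt_of_le (by exact_mod_cast g.lt_succ_self) hz

theorem card_le_krullDim_quotient_one {s : Finset ℕ}
    (hs : ∀ g ∈ s, g ∉ valueSet (1 : Submodule S R)) :
    (#s : WithBot ℕ∞) ≤ Order.krullDim (Submodule S (R ⧸ (1 : Submodule S R))) := by
  rw [Order.krullDim_eq_of_orderIso (comapMkQRelIso _)]
  let E : ℕ → Set.Ici (1 : Submodule S R) := fun h =>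
    ⟨_, le_sup_left (b := (maximalIdeal R ^ h).restrictScalars S)⟩
  refine Order.card_le_krullDim_of_antitone (f := E) (fun _ _ hle => ?_) s
    fun g hg => Subtype.mk_lt_mk.mpr (one_sup_pow_succ_lt (hs g hg))
  exact Subtype.mk_le_mk.mpr
    (sup_le_sup_left ((restrictScalars_le S).mpr (Ideal.pow_le_pow_right hle)) _)

end Submodule

namespace Subalgebra

variable {S K : Type*} [CommRing S] [Field K] [Algebra S K] (A : Subalgebra S K)

theorem algebraMap_injective_of_isFractionRing [IsFractionRing S K] :
    Function.Injective (algebraMap S A) :=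
  fun a b h => IsFractionRing.injective S K (by simpa using congrArg Subtype.val h)

theorem exists_maximalIdeal_pow_le_map [IsFractionRing S K] [IsDiscreteValuationRing A]
    [Module.Finite S A] {I : Ideal S} (hI : I ≠ ⊥) :
    ∃ c : ℕ, (maximalIdeal A ^ c).restrictScalars S ≤ Submodule.map (Algebra.linearMap S A) I := by
  obtain ⟨b, hb, hbA⟩ := FractionalIdeal.isFractional_of_fg (S := nonZeroDivisors S)
    (Module.Finite.iff_fg.mp ‹Module.Finite S A› : (Subalgebra.toSubmodule A).FG)
  obtain ⟨a, haI, ha⟩ := Submodule.exists_mem_ne_zero_of_ne_bot hI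
  have hy : algebraMap S A (a * b) ≠ 0 := by
    rw [map_ne_zero_iff _ (algebraMap_injective_of_isFractionRing A)]
    exact fun hab => ha ((mem_nonZeroDivisors_iff_right.mp hb) a hab)
  obtain ⟨c, hc⟩ := ENat.ne_top_iff_exists.mp
    (IsDiscreteValuationRing.addVal_eq_top_iff.not.mpr hy)
  refine ⟨c, fun x hx => ?_⟩
  obtain ⟨z, rfl⟩ := addVal_le_iff_dvd.mp (hc.symm ▸ mem_maximalIdeal_pow_iff.mp hx)
  obtain ⟨s, hs⟩ := hbA z z.2
  refine ⟨a * s, I.mul_mem_right s haI, Subtype.val_injective ?_⟩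
  simp [hs, Algebra.smul_def, mul_assoc]

theorem maximalIdeal_pow_le_map_comap [IsDiscreteValuationRing A] {I CI : Ideal S}
    (hCI : ∀ a : S, a ∈ CI ↔ ∀ x : A, algebraMap S K a * (x : K) ∈ algebraMap S K '' (I : Set S))
    {c : ℕ}
    (hc : (maximalIdeal A ^ c).restrictScalars S ≤ Submodule.map (Algebra.linearMap S A) I) :
    (maximalIdeal A ^ c).restrictScalars S ≤
      (Submodule.comap I.subtype CI).map ((Algebra.linearMap S A) ∘ₗ I.subtype) := by
  intro x hx
  obtain ⟨a, haI, rfl⟩ := hc hx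
  refine ⟨⟨a, haI⟩, (hCI a).mpr fun y => ?_, rfl⟩
  obtain ⟨b, hbI, hb⟩ := hc (Ideal.mul_mem_right y _ hx)
  exact ⟨b, hbI, by simpa using congrArg Subtype.val hb⟩

end Subalgebra

theorem length_ideal_mod_conductor_le_general
    (S : Type*) [CommRing S]
    (K : Type*) [Field K] [Algebra S K] [IsFractionRing S K]
    [IsDiscreteValuationRing ↥(integralClosure S K)]
    [Module.Finite S ↥(integralClosure S K)]
    (hres : ∀ x : ↥(integralClosure S K), ∃ a : S,
      x - algebraMap S ↥(integralClosure S K) a ∈ maximalIdeal ↥(integralClosure S K))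
    (I : Ideal S)
    (CI : Ideal S)
    (hCI : ∀ a : S, a ∈ CI ↔ ∀ x : ↥(integralClosure S K),
      algebraMap S K a * (x : K) ∈ (algebraMap S K) '' (I : Set S)) :
    moduleLength S (↥I ⧸ Submodule.comap I.subtype CI) ≤
      moduleLength S
        (↥(integralClosure S K) ⧸
          LinearMap.range (Algebra.linearMap S ↥(integralClosure S K))) := by
  classical
  set A := integralClosure S K
  rcases eq_or_ne I ⊥ with rfl | hI
  · exact Order.krullDim_nonpos_of_subsingleton.trans Order.krullDim_nonneg
  let φ := (Algebra.linearMap S A) ∘ₗ I.subtype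
  have hφ : Function.Injective φ :=
    (A.algebraMap_injective_of_isFractionRing).comp Subtype.val_injective
  have hc : ∃ c : ℕ, (maximalIdeal A ^ c).restrictScalars S ≤ LinearMap.range φ := by
    simpa [φ, LinearMap.range_comp] using A.exists_maximalIdeal_pow_le_map hI
  have hcI : (maximalIdeal A ^ Nat.find hc).restrictScalars S ≤
      Submodule.map (Algebra.linearMap S A) I := by
    simpa [φ, LinearMap.range_comp] using Nat.find_spec hc
  rw [moduleLength, moduleLength, ← Submodule.one_eq_range]
  calc Order.krullDim (Submodule S (↥I ⧸ Submodule.comap I.subtype CI))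
      ≤ Order.krullDim (Set.Icc ((Submodule.comap I.subtype CI).map φ) (LinearMap.range φ)) :=
        Submodule.krullDim_quotient_le_krullDim_Icc hφ _
    _ ≤ _ := Submodule.krullDim_Icc_le_card_notMem_valueSet_one hres LinearMap.map_le_range
        (A.maximalIdeal_pow_le_map_comap hCI hcI) fun k hk => Nat.find_min hc hk
    _ ≤ _ := Submodule.card_le_krullDim_quotient_one fun g hg => (mem_filter.mp hg).2

/-- In the analytically irreducible, residually rational setting, with
`δ = ℓ_S(S̄/S)`, for every `𝔫`-primary ideal `I` of `S` and its conductor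
`𝔠_I = (I :_K S̄)` (the largest `S̄`-ideal contained in `I`) one has `ℓ_S(I/𝔠_I) ≤ δ`. -/
theorem length_ideal_mod_conductor_le
    (S : Type*) [CommRing S] [IsDomain S] [IsNoetherianRing S] [IsLocalRing S]
    (hdim : ringKrullDim S = 1)
    (hreg : Module.finrank (ResidueField S) (CotangentSpace S) ≠ 1)
    (hk : Infinite (ResidueField S))
    (K : Type*) [Field K] [Algebra S K] [IsFractionRing S K]
    [IsDiscreteValuationRing ↥(integralClosure S K)]
    [Module.Finite S ↥(integralClosure S K)]
    (hres : ∀ x : ↥(integralClosure S K), ∃ a : S,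
      x - algebraMap S ↥(integralClosure S K) a ∈ maximalIdeal ↥(integralClosure S K))
    (I : Ideal S) (hprim : I.radical = maximalIdeal S)
    (CI : Ideal S)
    (hCI : ∀ a : S, a ∈ CI ↔ ∀ x : ↥(integralClosure S K),
      algebraMap S K a * (x : K) ∈ (algebraMap S K) '' (I : Set S)) :
    moduleLength S (↥I ⧸ Submodule.comap I.subtype CI) ≤
      moduleLength S
        (↥(integralClosure S K) ⧸
          LinearMap.range (Algebra.linearMap S ↥(integralClosure S K))) :=
  length_ideal_mod_conductor_le_general S K hres I CI hCI
end
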